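/- Let C₀(Q) ⊆ A be a central non-degenerate inclusion, B a C*-algebra, and Δ : A → C₀(Q, B) an injective *-homomorphism into the C*-algebra of continuous B-valued functions on Q vanishing at infinity, which is C₀(Q)-linear in the sense that Δ(f a)(q) = f(q)·Δ(a)(q) for all f ∈ C₀(Q), a ∈ A, q ∈ Q. Then p^unif_q(a) = ‖Δ(a)(q)‖ for every a ∈ A and q ∈ Q; in particular, for every a ∈ A the map q ↦ p^unif_q(a) is continuous on Q. -/
import Mathlib


open scoped ComplexOrder
open ZeroAtInfty

/-- `p^unif_q(a) = inf {‖f a‖ : f ∈ C₀(Q), 0 ≤ f ≤ 1, f q = 1}`, the quotient seminorm of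
`A / J^unif_q`. -/
noncomputable def punif {Q : Type*} [TopologicalSpace Q] [LocallyCompactSpace Q] [T2Space Q]
    {A : Type*} [NonUnitalCStarAlgebra A]
    (ι : C₀(Q, ℂ) →⋆ₙₐ[ℂ] A) (q : Q) (a : A) : ℝ :=
  sInf {r : ℝ | ∃ f : C₀(Q, ℂ), (∀ x : Q, 0 ≤ f x ∧ f x ≤ 1) ∧ f q = 1 ∧ r = ‖ι f * a‖}

/-- Evaluation is norm-nonincreasing on `C₀(Q, B)`. -/
lemma eval_norm_le {Q : Type*} [TopologicalSpace Q] {B : Type*} [NormedAddCommGroup B]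
    (g : C₀(Q, B)) (x : Q) : ‖g x‖ ≤ ‖g‖ := by
  rw [← ZeroAtInftyContinuousMap.norm_toBCF_eq_norm]
  exact g.toBCF.norm_coe_le_norm x

/-- Norm bound on `C₀(Q, B)` from pointwise bounds. -/
lemma norm_le_of_forall {Q : Type*} [TopologicalSpace Q] {B : Type*} [NormedAddCommGroup B]
    (g : C₀(Q, B)) {C : ℝ} (hC : 0 ≤ C) (h : ∀ x, ‖g x‖ ≤ C) : ‖g‖ ≤ C := by
  rw [← ZeroAtInftyContinuousMap.norm_toBCF_eq_norm]
  exact (BoundedContinuousFunction.norm_le hC).2 h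

/-- Bump functions: for `q` in an open set `U` of a locally compact Hausdorff space, there is
`F ∈ C₀(Q, ℂ)` with `0 ≤ F ≤ 1`, `F q = 1` and `F = 0` outside `U`. -/
lemma exists_bump {Q : Type*} [TopologicalSpace Q] [LocallyCompactSpace Q] [T2Space Q]
    {q : Q} {U : Set Q} (hU : IsOpen U) (hq : q ∈ U) :
    ∃ F : C₀(Q, ℂ), (∀ x : Q, 0 ≤ F x ∧ F x ≤ 1) ∧ F q = 1 ∧ ∀ x ∉ U, F x = 0 := by
  obtain ⟨f, hf1, hf0, hfc, hf01⟩ := exists_continuous_one_zero_of_isCompact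
    (isCompact_singleton (x := q)) hU.isClosed_compl
    (by simpa [Set.disjoint_singleton_left] using hq)
  have hcont : Continuous fun x : Q => (f x : ℂ) := Complex.continuous_ofReal.comp f.continuous
  have hcs : HasCompactSupport fun x : Q => (f x : ℂ) :=
    hfc.comp_left (g := fun r : ℝ => (r : ℂ)) (by simp)
  refine ⟨⟨⟨fun x => (f x : ℂ), hcont⟩, hcs.is_zero_at_infty⟩, fun x => ?_, ?_, fun x hx => ?_⟩
  · constructor
    · exact Complex.zero_le_real.2 (hf01 x).1
    · show ((f x : ℂ)) ≤ 1
      exact_mod_cast Complex.real_le_real.2 (hf01 x).2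
  · have : f q = 1 := hf1 rfl
    simp [ZeroAtInftyContinuousMap.coe_mk, this]
  · have : f x = 0 := hf0 hx
    simp [ZeroAtInftyContinuousMap.coe_mk, this]

/-- If `Δ : A → C₀(Q, B)` is an injective `C₀(Q)`-linear *-homomorphism,
then `p^unif_q(a) = ‖Δ(a)(q)‖`; in particular `q ↦ p^unif_q(a)` is continuous. -/
theorem stmt19 {Q : Type*} [TopologicalSpace Q] [LocallyCompactSpace Q] [T2Space Q]
    {A : Type*} [NonUnitalCStarAlgebra A] {B : Type*} [NonUnitalCStarAlgebra B]
    (ι : C₀(Q, ℂ) →⋆ₙₐ[ℂ] A) (hisom : Isometry ι)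
    (hcentral : ∀ (f : C₀(Q, ℂ)) (a : A), ι f * a = a * ι f)
    (hnondeg : closure
      (Submodule.span ℂ {x : A | ∃ (f : C₀(Q, ℂ)) (a : A), x = ι f * a} : Set A) = Set.univ)
    (Δ : A →⋆ₙₐ[ℂ] C₀(Q, B)) (hinj : Function.Injective Δ)
    (hlin : ∀ (f : C₀(Q, ℂ)) (a : A) (q : Q), Δ (ι f * a) q = f q • Δ a q) :
    (∀ (a : A) (q : Q), punif ι q a = ‖Δ a q‖) ∧
    ∀ a : A, Continuous fun q : Q => punif ι q a := by
  have hΔnorm : ∀ b : A, ‖Δ b‖ = ‖b‖ := fun b => NonUnitalStarAlgHom.norm_map Δ hinj b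
  have main : ∀ (a : A) (q : Q), punif ι q a = ‖Δ a q‖ := by
    intro a q
    set S : Set ℝ :=
      {r : ℝ | ∃ f : C₀(Q, ℂ), (∀ x : Q, 0 ≤ f x ∧ f x ≤ 1) ∧ f q = 1 ∧ r = ‖ι f * a‖} with hS
    -- lower bound: every element of S is ≥ ‖Δ a q‖
    have hlb : ∀ r ∈ S, ‖Δ a q‖ ≤ r := by
      rintro r ⟨f, hf01, hfq, rfl⟩
      calc ‖Δ a q‖ = ‖f q • Δ a q‖ := by rw [hfq, one_smul]
        _ = ‖Δ (ι f * a) q‖ := by rw [hlin]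
        _ ≤ ‖Δ (ι f * a)‖ := eval_norm_le _ q
        _ = ‖ι f * a‖ := hΔnorm _
    -- for every ε > 0 there is an element of S that is ≤ ‖Δ a q‖ + ε
    have hub : ∀ ε : ℝ, 0 < ε → ∃ r ∈ S, r ≤ ‖Δ a q‖ + ε := by
      intro ε hε
      set C : ℝ := ‖Δ a q‖ + ε with hC
      have hC0 : 0 ≤ C := by positivity
      have hUopen : IsOpen {x : Q | ‖Δ a x‖ < C} := by
        have : Continuous fun x : Q => ‖Δ a x‖ := (map_continuous (Δ a)).norm
        exact isOpen_lt this continuous_const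
      have hqU : q ∈ {x : Q | ‖Δ a x‖ < C} := by
        simp only [Set.mem_setOf_eq, hC]
        linarith
      obtain ⟨F, hF01, hFq, hF0⟩ := exists_bump hUopen hqU
      refine ⟨‖ι F * a‖, ⟨F, hF01, hFq, rfl⟩, ?_⟩
      rw [← hΔnorm (ι F * a)]
      refine norm_le_of_forall _ hC0 fun x => ?_
      rw [hlin, norm_smul]
      by_cases hx : x ∈ {x : Q | ‖Δ a x‖ < C}
      · have h1 : ‖F x‖ ≤ 1 := by
          have h0 := (hF01 x).1
          have h1 := (hF01 x).2
          have hre : F x = ((F x).re : ℂ) := Complex.eq_re_of_ofReal_le (by exact_mod_cast h0)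
          have h0' : (0:ℝ) ≤ (F x).re := (Complex.nonneg_iff.1 h0).1
          have h1' : (F x).re ≤ 1 := by simpa using (Complex.le_def.1 h1).1
          rw [hre, Complex.norm_real, Real.norm_eq_abs, abs_le]
          exact ⟨by linarith, h1'⟩
        calc ‖F x‖ * ‖Δ a x‖ ≤ 1 * C := by
              exact mul_le_mul h1 (le_of_lt hx) (norm_nonneg _) zero_le_one
          _ = C := one_mul C
      · rw [hF0 x hx]
        simpa using hC0
    have hne : S.Nonempty := by
      obtain ⟨r, hr, -⟩ := hub 1 one_pos
      exact ⟨r, hr⟩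
    have hbdd : BddBelow S := ⟨‖Δ a q‖, hlb⟩
    refine le_antisymm ?_ (le_csInf hne hlb)
    refine le_of_forall_pos_le_add fun ε hε => ?_
    obtain ⟨r, hrS, hr⟩ := hub ε hε
    exact (csInf_le hbdd hrS).trans hr
  refine ⟨main, fun a => ?_⟩
  have : (fun q : Q => punif ι q a) = fun q => ‖Δ a q‖ := funext fun q => main a q
  rw [this]
  exact (map_continuous (Δ a)).norm
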